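/- Let f : ℍ → ℍ be continuously real-differentiable on an open set U ⊆ ℍ, and let q₀, q₁ ∈ U be such that the segment joining q₀ and q₁ is contained in U. Set λ := q₁ − q₀. Then f(q₁) − f(q₀) = ∫₀¹ Σ_{η ∈ {1,i,j,k}} (η λ η⁻¹) · (∂ᵣf/∂q^η)(q₀ + t λ) dt, and also f(q₁) − f(q₀) = ∫₀¹ Σ_{η ∈ {1,i,j,k}} (η λ η⁻¹)* · (∂ᵣf/∂q^{η*})(q₀ + t λ) dt. -/

import Mathlib

/-! By the fundamental theorem of calculus along the segment,
`f q₁ - f q₀ = ∫₀¹ Df(q₀ + tλ) λ dt`, so it suffices to show pointwise that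
`Σ_η (ηλη⁻¹) · ∂ᵣf/∂q^η = Df λ`. Conjugation `x ↦ ηxη⁻¹` is multiplicative, so the left side
collapses to `Σ_η η y η⁻¹ · D_u f` for `(y, u) ∈ {(λ, 1), (λi, i), (λj, j), (λk, k)}`, and
`Σ_η η y η⁻¹ = 4 re y` recovers the real coordinates of `λ`. The conjugate form is the same
computation with `λ*`, because `(ηλη⁻¹)* = ηλ*η⁻¹` for the unit quaternions `η`. -/

open Quaternion Filter Topology Asymptotics

noncomputable section

/-- The imaginary unit `i` of the real quaternions. -/
def qI : ℍ[ℝ] := ⟨0, 1, 0, 0⟩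
/-- The imaginary unit `j` of the real quaternions. -/
def qJ : ℍ[ℝ] := ⟨0, 0, 1, 0⟩
/-- The imaginary unit `k` of the real quaternions. -/
def qK : ℍ[ℝ] := ⟨0, 0, 0, 1⟩

/-- Quaternion rotation `p ↦ μ p μ⁻¹`. -/
def qRot (μ p : ℍ[ℝ]) : ℍ[ℝ] := μ * p * μ⁻¹

/-- The left GHR derivative `∂f/∂q^μ` at `q`. -/
def lD (f : ℍ[ℝ] → ℍ[ℝ]) (μ q : ℍ[ℝ]) : ℍ[ℝ] :=
  (4 : ℍ[ℝ])⁻¹ * (fderiv ℝ f q 1 - fderiv ℝ f q qI * qRot μ qI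
    - fderiv ℝ f q qJ * qRot μ qJ - fderiv ℝ f q qK * qRot μ qK)

/-- The left conjugate GHR derivative `∂f/∂q^{μ*}` at `q`. -/
def lDc (f : ℍ[ℝ] → ℍ[ℝ]) (μ q : ℍ[ℝ]) : ℍ[ℝ] :=
  (4 : ℍ[ℝ])⁻¹ * (fderiv ℝ f q 1 + fderiv ℝ f q qI * qRot μ qI
    + fderiv ℝ f q qJ * qRot μ qJ + fderiv ℝ f q qK * qRot μ qK)

/-- The right GHR derivative `∂ᵣf/∂q^μ` at `q`. -/
def rD (f : ℍ[ℝ] → ℍ[ℝ]) (μ q : ℍ[ℝ]) : ℍ[ℝ] :=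
  (4 : ℍ[ℝ])⁻¹ * (fderiv ℝ f q 1 - qRot μ qI * fderiv ℝ f q qI
    - qRot μ qJ * fderiv ℝ f q qJ - qRot μ qK * fderiv ℝ f q qK)

/-- The right conjugate GHR derivative `∂ᵣf/∂q^{μ*}` at `q`. -/
def rDc (f : ℍ[ℝ] → ℍ[ℝ]) (μ q : ℍ[ℝ]) : ℍ[ℝ] :=
  (4 : ℍ[ℝ])⁻¹ * (fderiv ℝ f q 1 + qRot μ qI * fderiv ℝ f q qI
    + qRot μ qJ * fderiv ℝ f q qJ + qRot μ qK * fderiv ℝ f q qK)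

@[simp] lemma qI_re : qI.re = 0 := rfl
@[simp] lemma qI_imI : qI.imI = 1 := rfl
@[simp] lemma qI_imJ : qI.imJ = 0 := rfl
@[simp] lemma qI_imK : qI.imK = 0 := rfl
@[simp] lemma qJ_re : qJ.re = 0 := rfl
@[simp] lemma qJ_imI : qJ.imI = 0 := rfl
@[simp] lemma qJ_imJ : qJ.imJ = 1 := rfl
@[simp] lemma qJ_imK : qJ.imK = 0 := rfl
@[simp] lemma qK_re : qK.re = 0 := rfl
@[simp] lemma qK_imI : qK.imI = 0 := rfl
@[simp] lemma qK_imJ : qK.imJ = 0 := rfl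
@[simp] lemma qK_imK : qK.imK = 1 := rfl

lemma qI_inv : qI⁻¹ = -qI :=
  inv_eq_of_mul_eq_one_right <| by ext <;> simp [re_mul, imI_mul, imJ_mul, imK_mul]

lemma qJ_inv : qJ⁻¹ = -qJ :=
  inv_eq_of_mul_eq_one_right <| by ext <;> simp [re_mul, imI_mul, imJ_mul, imK_mul]

lemma qK_inv : qK⁻¹ = -qK :=
  inv_eq_of_mul_eq_one_right <| by ext <;> simp [re_mul, imI_mul, imJ_mul, imK_mul]

lemma qI_ne_zero : qI ≠ 0 := fun h => by simpa using congrArg (·.imI) h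

lemma qJ_ne_zero : qJ ≠ 0 := fun h => by simpa using congrArg (·.imJ) h

lemma qK_ne_zero : qK ≠ 0 := fun h => by simpa using congrArg (·.imK) h

lemma star_qI : star qI = -qI := by ext <;> simp

lemma star_qJ : star qJ = -qJ := by ext <;> simp

lemma star_qK : star qK = -qK := by ext <;> simp

lemma qRot_mul {μ : ℍ[ℝ]} (hμ : μ ≠ 0) (p q : ℍ[ℝ]) :
    qRot μ (p * q) = qRot μ p * qRot μ q := by
  simp only [qRot, mul_assoc, inv_mul_cancel_left₀ hμ]

lemma star_qRot {μ : ℍ[ℝ]} (hμ : star μ = μ⁻¹) (p : ℍ[ℝ]) :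
    star (qRot μ p) = qRot μ (star p) := by
  simp only [qRot, star_mul, star_inv₀, hμ, inv_inv, mul_assoc]

lemma sum_qRot_basis (x : ℍ[ℝ]) :
    qRot 1 x + qRot qI x + qRot qJ x + qRot qK x = (4 * x.re : ℝ) := by
  ext <;> simp [qRot, qI_inv, qJ_inv, qK_inv, re_mul, imI_mul, imJ_mul, imK_mul]; ring

lemma sum_qRot_basis_mul (x y : ℍ[ℝ]) :
    qRot 1 x * y + qRot qI x * y + qRot qJ x * y + qRot qK x * y = (4 * x.re) • y := by
  rw [← add_mul, ← add_mul, ← add_mul, sum_qRot_basis, coe_mul_eq_smul]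

lemma fderiv_apply_eq_sum_basis (f : ℍ[ℝ] → ℍ[ℝ]) (q x : ℍ[ℝ]) :
    fderiv ℝ f q x = x.re • fderiv ℝ f q 1 + x.imI • fderiv ℝ f q qI
      + x.imJ • fderiv ℝ f q qJ + x.imK • fderiv ℝ f q qK := by
  conv_lhs => rw [show x = x.re • (1 : ℍ[ℝ]) + x.imI • qI + x.imJ • qJ + x.imK • qK by
    ext <;> simp]
  simp only [map_add, map_smul]

lemma inv_four_eq_coe : (4 : ℍ[ℝ])⁻¹ = ((4⁻¹ : ℝ) : ℍ[ℝ]) := by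
  rw [coe_inv]
  rfl

lemma qRot_mul_rD {μ : ℍ[ℝ]} (hμ : μ ≠ 0) (f : ℍ[ℝ] → ℍ[ℝ]) (q x : ℍ[ℝ]) :
    qRot μ x * rD f μ q = (4⁻¹ : ℝ) • (qRot μ x * fderiv ℝ f q 1
      - qRot μ (x * qI) * fderiv ℝ f q qI - qRot μ (x * qJ) * fderiv ℝ f q qJ
      - qRot μ (x * qK) * fderiv ℝ f q qK) := by
  rw [rD, inv_four_eq_coe, ← mul_assoc, ← coe_commutes, mul_assoc, coe_mul_eq_smul]
  simp only [mul_sub, ← mul_assoc, qRot_mul hμ]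

lemma star_qRot_mul_rDc {μ : ℍ[ℝ]} (hμ : μ ≠ 0) (hμ' : star μ = μ⁻¹) (f : ℍ[ℝ] → ℍ[ℝ])
    (q x : ℍ[ℝ]) :
    star (qRot μ x) * rDc f μ q = (4⁻¹ : ℝ) • (qRot μ (star x) * fderiv ℝ f q 1
      + qRot μ (star x * qI) * fderiv ℝ f q qI + qRot μ (star x * qJ) * fderiv ℝ f q qJ
      + qRot μ (star x * qK) * fderiv ℝ f q qK) := by
  rw [rDc, star_qRot hμ', inv_four_eq_coe, ← mul_assoc, ← coe_commutes, mul_assoc,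
    coe_mul_eq_smul]
  simp only [mul_add, ← mul_assoc, qRot_mul hμ]

lemma sum_qRot_mul_rD (f : ℍ[ℝ] → ℍ[ℝ]) (q x : ℍ[ℝ]) :
    qRot 1 x * rD f 1 q + qRot qI x * rD f qI q + qRot qJ x * rD f qJ q
      + qRot qK x * rD f qK q = fderiv ℝ f q x := by
  rw [qRot_mul_rD one_ne_zero, qRot_mul_rD qI_ne_zero, qRot_mul_rD qJ_ne_zero,
    qRot_mul_rD qK_ne_zero, fderiv_apply_eq_sum_basis f q x]
  have h1 := sum_qRot_basis_mul x (fderiv ℝ f q 1)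
  have hI := sum_qRot_basis_mul (x * qI) (fderiv ℝ f q qI)
  have hJ := sum_qRot_basis_mul (x * qJ) (fderiv ℝ f q qJ)
  have hK := sum_qRot_basis_mul (x * qK) (fderiv ℝ f q qK)
  simp only [re_mul, qI_re, qI_imI, qI_imJ, qI_imK, qJ_re, qJ_imI, qJ_imJ, qJ_imK,
    qK_re, qK_imI, qK_imJ, qK_imK] at hI hJ hK
  linear_combination (norm := module) (4⁻¹ : ℝ) • (h1 - hI - hJ - hK)

lemma sum_star_qRot_mul_rDc (f : ℍ[ℝ] → ℍ[ℝ]) (q x : ℍ[ℝ]) :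
    star (qRot 1 x) * rDc f 1 q + star (qRot qI x) * rDc f qI q
      + star (qRot qJ x) * rDc f qJ q + star (qRot qK x) * rDc f qK q = fderiv ℝ f q x := by
  rw [star_qRot_mul_rDc one_ne_zero (by simp),
    star_qRot_mul_rDc qI_ne_zero (by rw [star_qI, qI_inv]),
    star_qRot_mul_rDc qJ_ne_zero (by rw [star_qJ, qJ_inv]),
    star_qRot_mul_rDc qK_ne_zero (by rw [star_qK, qK_inv]), fderiv_apply_eq_sum_basis f q x]
  have h1 := sum_qRot_basis_mul (star x) (fderiv ℝ f q 1)
  have hI := sum_qRot_basis_mul (star x * qI) (fderiv ℝ f q qI)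
  have hJ := sum_qRot_basis_mul (star x * qJ) (fderiv ℝ f q qJ)
  have hK := sum_qRot_basis_mul (star x * qK) (fderiv ℝ f q qK)
  simp only [re_mul, re_star, imI_star, imJ_star, imK_star, qI_re, qI_imI, qI_imJ, qI_imK,
    qJ_re, qJ_imI, qJ_imJ, qJ_imK, qK_re, qK_imI, qK_imJ, qK_imK] at h1 hI hJ hK
  linear_combination (norm := module) (4⁻¹ : ℝ) • (h1 + hI + hJ + hK)

theorem sub_eq_integral_fderiv_segment {E F : Type*} [NormedAddCommGroup E] [NormedSpace ℝ E]
    [NormedAddCommGroup F] [NormedSpace ℝ F] [CompleteSpace F] {f : E → F} {U : Set E}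
    (hU : IsOpen U) (hf : ContDiffOn ℝ 1 f U) {a b : E} (hseg : segment ℝ a b ⊆ U) :
    f b - f a = ∫ t in (0 : ℝ)..1, fderiv ℝ f (a + t • (b - a)) (b - a) := by
  set γ : ℝ → E := fun t => a + t • (b - a)
  have hγU : ∀ t ∈ Set.uIcc (0 : ℝ) 1, γ t ∈ U := fun t ht =>
    hseg <| by
      rw [segment_eq_image']
      exact ⟨t, by rwa [Set.uIcc_of_le zero_le_one] at ht, rfl⟩
  have hγ : ∀ t, HasDerivAt γ (b - a) t := fun t => by
    simpa only [one_smul] using ((hasDerivAt_id' t).smul_const (b - a)).const_add a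
  have hderiv : ∀ t ∈ Set.uIcc (0 : ℝ) 1,
      HasDerivAt (f ∘ γ) (fderiv ℝ f (γ t) (b - a)) t := fun t ht =>
    (((hf.differentiableOn one_ne_zero).differentiableAt
      (hU.mem_nhds (hγU t ht))).hasFDerivAt).comp_hasDerivAt t (hγ t)
  have hcont : ContinuousOn (fun t => fderiv ℝ f (γ t) (b - a)) (Set.uIcc 0 1) :=
    ((hf.continuousOn_fderiv_of_isOpen hU le_rfl).comp (by fun_prop) hγU).clm_apply
      continuousOn_const
  simpa [γ] using (intervalIntegral.integral_eq_sub_of_hasDerivAt hderiv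
    hcont.intervalIntegrable).symm

theorem mean_value_theorem_right_form_general
    (f : ℍ[ℝ] → ℍ[ℝ]) (U : Set ℍ[ℝ]) (hU : IsOpen U)
    (hf : ContDiffOn ℝ 1 f U) (q₀ q₁ : ℍ[ℝ])
    (hseg : segment ℝ q₀ q₁ ⊆ U) :
    (f q₁ - f q₀ = ∫ t in (0:ℝ)..1,
        (qRot 1 (q₁ - q₀) * rD f 1 (q₀ + t • (q₁ - q₀))
          + qRot qI (q₁ - q₀) * rD f qI (q₀ + t • (q₁ - q₀))
          + qRot qJ (q₁ - q₀) * rD f qJ (q₀ + t • (q₁ - q₀))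
          + qRot qK (q₁ - q₀) * rD f qK (q₀ + t • (q₁ - q₀)))) ∧
    (f q₁ - f q₀ = ∫ t in (0:ℝ)..1,
        (star (qRot 1 (q₁ - q₀)) * rDc f 1 (q₀ + t • (q₁ - q₀))
          + star (qRot qI (q₁ - q₀)) * rDc f qI (q₀ + t • (q₁ - q₀))
          + star (qRot qJ (q₁ - q₀)) * rDc f qJ (q₀ + t • (q₁ - q₀))
          + star (qRot qK (q₁ - q₀)) * rDc f qK (q₀ + t • (q₁ - q₀)))) := by
  simp only [sum_qRot_mul_rD, sum_star_qRot_mul_rDc, and_self]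
  exact sub_eq_integral_fderiv_segment hU hf hseg

theorem mean_value_theorem_right_form
    (f : ℍ[ℝ] → ℍ[ℝ]) (U : Set ℍ[ℝ]) (hU : IsOpen U)
    (hf : ContDiffOn ℝ 1 f U) (q₀ q₁ : ℍ[ℝ]) (hq₀ : q₀ ∈ U) (hq₁ : q₁ ∈ U)
    (hseg : segment ℝ q₀ q₁ ⊆ U) :
    (f q₁ - f q₀ = ∫ t in (0:ℝ)..1,
        (qRot 1 (q₁ - q₀) * rD f 1 (q₀ + t • (q₁ - q₀))
          + qRot qI (q₁ - q₀) * rD f qI (q₀ + t • (q₁ - q₀))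
          + qRot qJ (q₁ - q₀) * rD f qJ (q₀ + t • (q₁ - q₀))
          + qRot qK (q₁ - q₀) * rD f qK (q₀ + t • (q₁ - q₀)))) ∧
    (f q₁ - f q₀ = ∫ t in (0:ℝ)..1,
        (star (qRot 1 (q₁ - q₀)) * rDc f 1 (q₀ + t • (q₁ - q₀))
          + star (qRot qI (q₁ - q₀)) * rDc f qI (q₀ + t • (q₁ - q₀))
          + star (qRot qJ (q₁ - q₀)) * rDc f qJ (q₀ + t • (q₁ - q₀))
          + star (qRot qK (q₁ - q₀)) * rDc f qK (q₀ + t • (q₁ - q₀)))) :=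
  mean_value_theorem_right_form_general f U hU hf q₀ q₁ hseg

end
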